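/- With P' constructed as above from T ⪯ P in type B or C, one has P' → T; that is: (i) T ⪯ P'; (ii) p'_i ≤ t_{i+1} for all 1 ≤ i ≤ m−1 (no 2×2 squares in D(P',T)); and (iii) whenever p'_i = t_{i+1}, the integer p'_i is not a cut of D(P',T). -/

import Mathlib

open scoped Classical

/-- `p : ℕ → ℕ` encodes a Schubert symbol `{p 1 < … < p m} ⊆ [1,N]`
with the conventions `p 0 = 0` and `p (m+1) = N+1`, and the isotropic
condition that no two elements sum to `N+1`. -/
structure IsSSym (N m : ℕ) (p : ℕ → ℕ) : Prop where
  zero : p 0 = 0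
  top : p (m+1) = N+1
  mono : ∀ i j, i < j → j ≤ m+1 → p i < p j
  ub : ∀ i, 1 ≤ i → i ≤ m → p i ≤ N
  iso : ∀ i j, 1 ≤ i → i ≤ m → 1 ≤ j → j ≤ m → p i + p j ≠ N+1

/-- The underlying set `{p 1, …, p m}` of a Schubert symbol. -/
def symSet (m : ℕ) (p : ℕ → ℕ) : Finset ℕ := (Finset.Icc 1 m).image p

/-- Componentwise order `t_i ≤ p_i` on Schubert symbols. -/
def leS (m : ℕ) (t p : ℕ → ℕ) : Prop := ∀ i, 1 ≤ i → i ≤ m → t i ≤ p i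

/-- `c` is a visible cut of the Richardson diagram `D(P,T)`:
`p_i ≤ c < t_{i+1}` for some `0 ≤ i ≤ m`. -/
def visCut (m : ℕ) (p t : ℕ → ℕ) (c : ℕ) : Prop :=
  ∃ i, i ≤ m ∧ p i ≤ c ∧ c < t (i+1)

/-- `c` is an apparent cut of `D(P,T)`: `c` or `N−c` is a visible cut. -/
def appCut (N m : ℕ) (p t : ℕ → ℕ) (c : ℕ) : Prop :=
  visCut m p t c ∨ visCut m p t (N - c)

/-- `c` is a zero column of `D(P,T)`: `p_j < c < t_{j+1}` for some `j`. -/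
def zeroCol (m : ℕ) (p t : ℕ → ℕ) (c : ℕ) : Prop :=
  ∃ j, j ≤ m ∧ p j < c ∧ c < t (j+1)

/-- `(j,c)` is a lone star of `D(P,T)` with respect to the cut predicate `cut`. -/
def loneStar (m : ℕ) (p t : ℕ → ℕ) (cut : ℕ → Prop) (j c : ℕ) : Prop :=
  1 ≤ j ∧ j ≤ m ∧ t j ≤ c ∧ c ≤ p j ∧
    ((c = t j ∧ cut c) ∨ (c = p j ∧ cut (c-1)))

/-- `c ∈ 𝓛_{P,T}` : `c` is a zero column, or column `N+1−c` contains a lone star. -/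
def LSet (N m : ℕ) (p t : ℕ → ℕ) (cut : ℕ → Prop) (c : ℕ) : Prop :=
  1 ≤ c ∧ c ≤ N ∧
    (zeroCol m p t c ∨ ∃ j, loneStar m p t cut j (N+1-c))

/-- `[P] = P ∪ {N+1−p : p ∈ P}`. -/
def brP (N : ℕ) (P : Finset ℕ) : Finset ℕ := P ∪ P.image (fun p => N+1-p)

/-- The type-`D` type function `t(P) ∈ {0,1,2}`: if `n+1 ∈ [P]` it is the parity of
`#([1,n+1] \ P)`; otherwise it is `2`. -/
def tD (n : ℕ) (P : Finset ℕ) : ℕ :=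
  if (n+1) ∈ P ∨ (n+2) ∈ P then (Finset.Icc 1 (n+1) \ P).card % 2 else 2

/-- The type-`D` Bruhat order `T ⪯ P` on Schubert symbols for `OG(m, 2n+2)`. -/
def bruhatD (n m : ℕ) (t p : ℕ → ℕ) : Prop :=
  leS m t p ∧ ∀ c, 1 ≤ c → c ≤ n →
    Finset.Icc (c+1) (n+1) ⊆ brP (2*n+2) (symSet m p) →
    Finset.Icc (c+1) (n+1) ⊆ brP (2*n+2) (symSet m t) →
    ((symSet m p) ∩ Finset.Icc 1 c).card = ((symSet m t) ∩ Finset.Icc 1 c).card →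
    tD n (symSet m p) = tD n (symSet m t)

/-- The exceptional center cut `n+1` exists in `D(P,T)`:
`p_i = n+2 ≤ t_{i+1}` or `t_i = n+1 ≥ p_{i−1}` for some `i`. -/
def centerCut (n m : ℕ) (p t : ℕ → ℕ) : Prop :=
  ∃ i, 1 ≤ i ∧ i ≤ m ∧
    ((p i = n+2 ∧ n+2 ≤ t (i+1)) ∨ (t i = n+1 ∧ p (i-1) ≤ n+1))

/-- `c ∈ [1,n]` is a cut candidate of `D(P,T)`:
`[c+1,n+1] ⊆ [P] ∩ [T]` and `#(T ∩ [1,c]) = #(P ∩ [1,c]) + 1`. -/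
def cutCandidate (n m : ℕ) (p t : ℕ → ℕ) (c : ℕ) : Prop :=
  1 ≤ c ∧ c ≤ n ∧
  Finset.Icc (c+1) (n+1) ⊆ brP (2*n+2) (symSet m p) ∧
  Finset.Icc (c+1) (n+1) ⊆ brP (2*n+2) (symSet m t) ∧
  ((symSet m t) ∩ Finset.Icc 1 c).card = ((symSet m p) ∩ Finset.Icc 1 c).card + 1

/-- Exceptional cuts of `D(P,T)` in type `D`. -/
def excCut (n m : ℕ) (p t : ℕ → ℕ) (c : ℕ) : Prop :=
  (centerCut n m p t ∧ c = n+1) ∨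
  (tD n (symSet m t) ≠ tD n (symSet m p) ∧
    ∃ d, cutCandidate n m p t d ∧ (c = d ∨ c = 2*n+2 - d))

/-- The type-`D` cut set: apparent cuts together with exceptional cuts. -/
def cutD (n m : ℕ) (p t : ℕ → ℕ) (c : ℕ) : Prop :=
  appCut (2*n+2) m p t c ∨ excCut n m p t c

/-- The construction of the Schubert symbol `P'` from `T ⪯ P` in types `B` and `C`. -/
noncomputable def Pp (N m : ℕ) (p t : ℕ → ℕ) (i : ℕ) : ℕ :=
  if p i < t (i+1) then p i
  else if ¬ appCut N m p t (t (i+1) - 1) then t (i+1)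
  else ((Finset.Icc (t i) (t (i+1) - 1)).filter
        (fun c => ¬ LSet N m p t (appCut N m p t) c)).sup id

/-- The modified construction of the Schubert symbol `P̃` from `T ⪯ P` in type `D`. -/
noncomputable def Ptil (n m : ℕ) (p t : ℕ → ℕ) (i : ℕ) : ℕ :=
  if p i < t (i+1) then p i
  else if ¬ cutD n m p t (t (i+1) - 1) then
    (if t (i+1) = n+1 ∨ t (i+1) = n+2 then 2*n+3 - t (i+1) else t (i+1))
  else ((Finset.Icc (t i) (t (i+1) - 1)).filter
        (fun c => ¬ LSet (2*n+2) m p t (cutD n m p t) c)).sup id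

/-- A critical window `[c+1, N−c]` in `D(P,T)` (type `D`, defined when `t(T) ≠ t(P)`):
`c` and `N−c` are visible cuts and `[c+1,n+1] ⊆ [T] ∩ [P]`. -/
def critWindow (n m : ℕ) (p t : ℕ → ℕ) (c : ℕ) : Prop :=
  c ≤ n ∧ tD n (symSet m t) ≠ tD n (symSet m p) ∧
  visCut m p t c ∧ visCut m p t (2*n+2 - c) ∧
  Finset.Icc (c+1) (n+1) ⊆ brP (2*n+2) (symSet m t) ∧
  Finset.Icc (c+1) (n+1) ⊆ brP (2*n+2) (symSet m p)

/-- The quadratic form `f_c = x_1 x_N + … + x_c x_{N+1−c}`. -/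
noncomputable def fquad (N : ℕ) (c : ℕ) (x : ℕ → ℂ) : ℂ := ∑ i ∈ Finset.Icc 1 c, x i * x (N+1-i)

/-- The variety `Z_{P,T}` (affine cone) cut out by quadratic equations `f_c = 0`
for `c` in a prescribed set `Q` and linear equations `x_c = 0` for `c ∈ 𝓛_{P,T}`. -/
def Zvar (N m : ℕ) (p t : ℕ → ℕ) (Q : ℕ → Prop) (cut : ℕ → Prop) : Set (ℕ → ℂ) :=
  {x | (∀ c, Q c → fquad N c x = 0) ∧ ∀ c, LSet N m p t cut c → x c = 0}

/-!
Parts (i) and (ii) are read off the three branches of the construction; the content is (iii).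
If `p'_i = t_{i+1}`, the second branch was taken, so `t_{i+1} − 1` is not a cut of `D(P,T)`.
On the other hand every visible cut of `D(P',T)` is an apparent cut of `D(P,T)`: in the third
branch each column `c` with `p'_i ≤ c < t_{i+1} − 1` has `c + 1 ∈ 𝓛_{P,T}` by maximality of
`p'_i`, and `c + 1 ∈ 𝓛_{P,T}` forces `c` to be a cut. So a cut of `D(P',T)` at `t_{i+1}` would
be a cut of `D(P,T)`, and in types B/C isotropy of `T` pushes a cut at `t_{i+1}` down to
`t_{i+1} − 1`.
-/

section

variable {N m : ℕ} {p t : ℕ → ℕ} {i j c : ℕ}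

namespace IsSSym

lemma strictMonoOn (h : IsSSym N m p) : StrictMonoOn p (Set.Iic (m+1)) :=
  fun a _ b hb hab => h.mono a b hab hb

lemma le_iff_le (h : IsSSym N m p) {a b : ℕ} (ha : a ≤ m+1) (hb : b ≤ m+1) :
    p a ≤ p b ↔ a ≤ b :=
  h.strictMonoOn.le_iff_le ha hb

lemma lt_iff_lt (h : IsSSym N m p) {a b : ℕ} (ha : a ≤ m+1) (hb : b ≤ m+1) :
    p a < p b ↔ a < b :=
  h.strictMonoOn.lt_iff_lt ha hb

lemma pos (h : IsSSym N m p) (hj : 0 < j) (hjm : j ≤ m+1) : 0 < p j := by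
  simpa [h.zero] using h.mono 0 j hj hjm

end IsSSym

lemma appCut_sub_iff (hc : c ≤ N) : appCut N m p t (N - c) ↔ appCut N m p t c := by
  rw [appCut, appCut, Nat.sub_sub_self hc, or_comm]

lemma appCut_sub_one_of_appCut_t (hp : IsSSym N m p) (ht : IsSSym N m t) (hle : leS m t p)
    (hj : 1 ≤ j) (hjm : j ≤ m) (h : appCut N m p t (t j)) : appCut N m p t (t j - 1) := by
  have htj := ht.pos hj (by omega)
  have htjN := ht.ub j hj hjm
  rcases h with ⟨k, hk, hpk, htk⟩ | ⟨k, hk, hpk, htk⟩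
  · obtain rfl : k = j := by
      have := (hp.le_iff_le (by omega) (by omega)).1 (hpk.trans (hle j hj hjm))
      have := (ht.lt_iff_lt (by omega) (by omega)).1 htk
      omega
    have := hp.mono (k-1) k (by omega) (by omega)
    have := hle k hj hjm
    exact Or.inl ⟨k-1, by omega, by omega, by rw [Nat.sub_add_cancel hj]; omega⟩
  · have hne : t (k+1) + t j ≠ N + 1 := by
      rcases hk.lt_or_eq with hk | rfl
      · exact ht.iso (k+1) j (by omega) (by omega) hj hjm
      · rw [ht.top]; omega
    exact Or.inr ⟨k, hk, by omega, by omega⟩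

lemma appCut_p_of_appCut_sub_one (hp : IsSSym N m p) (ht : IsSSym N m t)
    (hj : 1 ≤ j) (hjm : j ≤ m) (h : appCut N m p t (p j - 1)) : appCut N m p t (p j) := by
  have hpj := hp.pos hj (by omega)
  have hpjN := hp.ub j hj hjm
  rcases h with ⟨k, hk, hpk, htk⟩ | ⟨k, hk, hpk, htk⟩
  · have := (hp.lt_iff_lt (by omega) (by omega)).1 (show p k < p j by omega)
    have := (ht.le_iff_le (by omega) (by omega)).2 (show k + 1 ≤ j by omega)
    have := ht.mono j (j+1) (by omega) (by omega)
    exact Or.inl ⟨j, hjm, le_rfl, by omega⟩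
  · have hne : p k + p j ≠ N + 1 := by
      rcases Nat.eq_zero_or_pos k with rfl | hk1
      · rw [hp.zero]; omega
      · exact hp.iso k j hk1 hk hj hjm
    exact Or.inr ⟨k, hk, by omega, by omega⟩

lemma appCut_of_LSet_succ (hp : IsSSym N m p) (ht : IsSSym N m t)
    (h : LSet N m p t (appCut N m p t) (c+1)) : appCut N m p t c := by
  obtain ⟨-, hcN, ⟨k, hk, hpk, htk⟩ | ⟨j, hj, hjm, -, -, hstar⟩⟩ := h
  · exact Or.inl ⟨k, hk, by omega, by omega⟩
  · rw [Nat.add_sub_add_right] at hstar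
    rw [← appCut_sub_iff (by omega : c ≤ N)]
    rcases hstar with ⟨-, hcut⟩ | ⟨hpj, hcut⟩
    · exact hcut
    · rw [hpj] at hcut ⊢
      exact appCut_p_of_appCut_sub_one hp ht hj hjm hcut

lemma not_LSet_t (hp : IsSSym N m p) (ht : IsSSym N m t) (hi1 : 1 ≤ i) (hi : i ≤ m)
    (hge : t (i+1) ≤ p i) : ¬ LSet N m p t (appCut N m p t) (t i) := by
  have hti := ht.mono i (i+1) (by omega) (by omega)
  have htiN := ht.ub i hi1 hi
  have not_visCut : ∀ k ≤ m, p k ≤ t i → t i < t (k+1) → False := fun k hk hpk htk => by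
    have := (ht.lt_iff_lt (by omega) (by omega)).1 htk
    have := (hp.le_iff_le (by omega) (by omega)).2 (show i ≤ k by omega)
    omega
  rintro ⟨-, -, ⟨k, hk, hpk, htk⟩ | ⟨j, hj, hjm, htj, -, ⟨hc, -⟩ | ⟨hpj, hcut⟩⟩⟩
  · exact not_visCut k hk hpk.le htk
  · exact ht.iso j i hj hjm hi1 hi (by omega)
  · rw [show N + 1 - t i - 1 = N - t i by omega, appCut_sub_iff htiN] at hcut
    rcases hcut with ⟨k, hk, hpk, htk⟩ | ⟨k, hk, hpk, htk⟩
    · exact not_visCut k hk hpk htk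
    · have := (hp.lt_iff_lt (by omega) (by omega)).1 (show p k < p j by omega)
      have := (ht.le_iff_le (by omega) (by omega)).1 (show t j ≤ t (k+1) by omega)
      obtain rfl : j = k + 1 := by omega
      exact ht.iso (k+1) i hj hjm hi1 hi (by omega)

noncomputable def nonLCols (N m : ℕ) (p t : ℕ → ℕ) (i : ℕ) : Finset ℕ :=
  (Finset.Icc (t i) (t (i+1) - 1)).filter (fun c => ¬ LSet N m p t (appCut N m p t) c)

lemma mem_nonLCols :
    c ∈ nonLCols N m p t i ↔
      (t i ≤ c ∧ c ≤ t (i+1) - 1) ∧ ¬ LSet N m p t (appCut N m p t) c := by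
  rw [nonLCols, Finset.mem_filter, Finset.mem_Icc]

lemma sup_nonLCols_le : (nonLCols N m p t i).sup id ≤ t (i+1) - 1 :=
  Finset.sup_le fun _ hc => (mem_nonLCols.1 hc).1.2

lemma Pp_of_lt (h : p i < t (i+1)) : Pp N m p t i = p i := if_pos h

lemma Pp_of_not_appCut (h : t (i+1) ≤ p i) (hc : ¬ appCut N m p t (t (i+1) - 1)) :
    Pp N m p t i = t (i+1) := by
  rw [Pp, if_neg (not_lt.2 h), if_pos hc]

lemma Pp_of_appCut (h : t (i+1) ≤ p i) (hc : appCut N m p t (t (i+1) - 1)) :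
    Pp N m p t i = (nonLCols N m p t i).sup id := by
  rw [Pp, if_neg (not_lt.2 h), if_neg (not_not.2 hc), nonLCols]

lemma Pp_le : Pp N m p t i ≤ t (i+1) := by
  rcases lt_or_ge (p i) (t (i+1)) with h | h
  · exact (Pp_of_lt h).trans_le h.le
  by_cases hc : appCut N m p t (t (i+1) - 1)
  · rw [Pp_of_appCut h hc]
    exact sup_nonLCols_le.trans (Nat.sub_le _ _)
  · rw [Pp_of_not_appCut h hc]

lemma le_Pp (hp : IsSSym N m p) (ht : IsSSym N m t) (hle : leS m t p) (hi : i ≤ m) :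
    t i ≤ Pp N m p t i := by
  rcases Nat.eq_zero_or_pos i with rfl | hi1
  · simp [ht.zero]
  have hti := ht.mono i (i+1) (by omega) (by omega)
  rcases lt_or_ge (p i) (t (i+1)) with h | h
  · rw [Pp_of_lt h]
    exact hle i hi1 hi
  by_cases hc : appCut N m p t (t (i+1) - 1)
  · rw [Pp_of_appCut h hc]
    exact Finset.le_sup (f := id)
      (mem_nonLCols.2 ⟨⟨le_rfl, by omega⟩, not_LSet_t hp ht hi1 hi h⟩)
  · rw [Pp_of_not_appCut h hc]
    exact hti.le

lemma appCut_of_Pp_le (hp : IsSSym N m p) (ht : IsSSym N m t) (hle : leS m t p) (hi : i ≤ m)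
    (hPc : Pp N m p t i ≤ c) (hct : c < t (i+1)) : appCut N m p t c := by
  rcases lt_or_ge (p i) (t (i+1)) with h | h
  · rw [Pp_of_lt h] at hPc
    exact Or.inl ⟨i, hi, hPc, hct⟩
  by_cases hc : appCut N m p t (t (i+1) - 1)
  · obtain rfl | hlt := (Nat.le_sub_one_of_lt hct).eq_or_lt
    · exact hc
    have hti := le_Pp hp ht hle hi
    rw [Pp_of_appCut h hc] at hPc hti
    refine appCut_of_LSet_succ hp ht (not_not.1 fun hL => ?_)
    have := Finset.le_sup (f := id) (mem_nonLCols (i := i) |>.2 ⟨⟨by omega, by omega⟩, hL⟩)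
    exact absurd (this.trans hPc) (by simp)
  · rw [Pp_of_not_appCut h hc] at hPc
    omega

lemma appCut_of_appCut_Pp (hp : IsSSym N m p) (ht : IsSSym N m t) (hle : leS m t p)
    (hc : c ≤ N) (h : appCut N m (Pp N m p t) t c) : appCut N m p t c := by
  have of_visCut : ∀ d, visCut m (Pp N m p t) t d → appCut N m p t d :=
    fun _ ⟨_, hj, hPd, hdt⟩ => appCut_of_Pp_le hp ht hle hj hPd hdt
  rcases h with h | h
  · exact of_visCut c h
  · exact (appCut_sub_iff hc).1 (of_visCut _ h)

lemma not_appCut_of_Pp_eq (hpos : 0 < t (i+1)) (h : Pp N m p t i = t (i+1)) :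
    ¬ appCut N m p t (t (i+1) - 1) := by
  intro hc
  rcases lt_or_ge (p i) (t (i+1)) with hlt | hge
  · rw [Pp_of_lt hlt] at h
    omega
  · rw [Pp_of_appCut hge hc] at h
    have := sup_nonLCols_le (N := N) (m := m) (p := p) (t := t) (i := i)
    omega

end

/-- (types B/C) The constructed `P'` satisfies `P' → T`:
(i) `T ⪯ P'`; (ii) `p'_i ≤ t_{i+1}` for `1 ≤ i ≤ m−1`; (iii) if `p'_i = t_{i+1}`
then `p'_i` is not a cut of `D(P',T)`. -/
theorem stmt_13 (N m : ℕ) (p t : ℕ → ℕ)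
    (hp : IsSSym N m p) (ht : IsSSym N m t) (hle : leS m t p) :
    leS m t (Pp N m p t) ∧
    (∀ i, 1 ≤ i → i ≤ m-1 → Pp N m p t i ≤ t (i+1)) ∧
    (∀ i, 1 ≤ i → i ≤ m-1 → Pp N m p t i = t (i+1) →
      ¬ appCut N m (Pp N m p t) t (Pp N m p t i)) := by
  refine ⟨fun i _ hi => le_Pp hp ht hle hi, fun _ _ _ => Pp_le, fun i hi1 hi heq hcut => ?_⟩
  have hpos : 0 < t (i+1) := ht.pos (by omega) (by omega)
  have htN : t (i+1) ≤ N := ht.ub (i+1) (by omega) (by omega)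
  rw [heq] at hcut
  exact not_appCut_of_Pp_eq hpos heq <| appCut_sub_one_of_appCut_t hp ht hle (by omega)
    (by omega) (appCut_of_appCut_Pp hp ht hle htN hcut)
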